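/- Suppose f is convex differentiable with ∇f being L-Lipschitz on the ball containing all iterates, and the stepsizes of adaptive gradient descent-2 satisfy α_0 L_1 ∈ [1/√2, 2]. Then α_k ≥ 1/(√3 L) for all k ≥ 1. -/
import Mathlib


/-- Stepsize rule of adaptive gradient descent-2:
`α_k = min{√(2/3+θ_{k-1})·α_{k-1}, α_{k-1}/√([2α_{k-1}²L_k²-1]_+)}`,
with the convention `a/0 = +∞` (when the bracket is nonpositive
the second bound is inactive). -/
noncomputable def adgd2Step (αp θp Lk : ℝ) : ℝ :=
  if 2 * αp ^ 2 * Lk ^ 2 - 1 ≤ 0 then Real.sqrt (2 / 3 + θp) * αp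
  else min (Real.sqrt (2 / 3 + θp) * αp) (αp / Real.sqrt (2 * αp ^ 2 * Lk ^ 2 - 1))

lemma one_le_of_sq {x : ℝ} (hx : 0 < x) (h : 1 ≤ x ^ 2) : 1 ≤ x := by nlinarith

/-- One-step analysis: if the previous step satisfies the invariant
`(2/3 + θ)·(α·Lc)² ≥ 1/3` (with `θ ≥ 0`, `α > 0`), then the new step is
positive, at least `1/(√3·Lc)`, and satisfies the same invariant with the
new ratio `θ' = α'/α`. -/
lemma adgd2_step_key (Lc αp θp Lk : ℝ) (hLc : 0 < Lc) (hαp : 0 < αp) (hθp : 0 ≤ θp)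
    (hLk0 : 0 ≤ Lk) (hLk : Lk ≤ Lc)
    (hinv : 1 / 3 ≤ (2 / 3 + θp) * (αp * Lc) ^ 2) :
    0 < adgd2Step αp θp Lk ∧ 1 ≤ adgd2Step αp θp Lk * (Real.sqrt 3 * Lc) ∧
      1 / 3 ≤ (2 / 3 + adgd2Step αp θp Lk / αp) * (adgd2Step αp θp Lk * Lc) ^ 2 := by
  have h3 : (Real.sqrt 3) ^ 2 = 3 := Real.sq_sqrt (by norm_num)
  have h3pos : 0 < Real.sqrt 3 := Real.sqrt_pos.mpr (by norm_num)
  set s := Real.sqrt (2 / 3 + θp) with hs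
  have hs2 : s ^ 2 = 2 / 3 + θp := Real.sq_sqrt (by linarith)
  have hspos : 0 < s := Real.sqrt_pos.mpr (by linarith)
  clear_value s
  have hs13 : 1 / 3 ≤ s := by nlinarith
  have hLk2 : Lk ^ 2 ≤ Lc ^ 2 := by nlinarith
  -- first candidate bound
  have hfirst : 1 ≤ s * αp * (Real.sqrt 3 * Lc) := by
    apply one_le_of_sq (by positivity)
    have heq : (s * αp * (Real.sqrt 3 * Lc)) ^ 2 = 3 * ((2/3 + θp) * (αp * Lc)^2) := by
      rw [mul_pow, mul_pow, mul_pow, h3, hs2]; ring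
    rw [heq]; linarith
  have hAinv : 1 / 3 ≤ (2 / 3 + s) * (s * αp * Lc) ^ 2 := by
    have h1 : 1 ≤ 3 * (s * αp * Lc) ^ 2 := by
      have heq : (s * αp * (Real.sqrt 3 * Lc)) ^ 2 = 3 * (s * αp * Lc) ^ 2 := by
        rw [mul_pow, mul_pow, mul_pow, h3]; ring
      nlinarith [mul_pos (mul_pos hspos hαp) hLc]
    nlinarith [sq_nonneg (s * αp * Lc)]
  unfold adgd2Step
  rw [← hs]
  by_cases hb : 2 * αp ^ 2 * Lk ^ 2 - 1 ≤ 0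
  · rw [if_pos hb]
    refine ⟨by positivity, hfirst, ?_⟩
    have hdiv : s * αp / αp = s := by field_simp
    rw [hdiv]; exact hAinv
  · rw [if_neg hb]
    push_neg at hb
    set r := Real.sqrt (2 * αp ^ 2 * Lk ^ 2 - 1) with hr
    have hr2 : r ^ 2 = 2 * αp ^ 2 * Lk ^ 2 - 1 := Real.sq_sqrt (by linarith)
    have hrpos : 0 < r := Real.sqrt_pos.mpr (by linarith)
    clear_value r
    have hsecond : 1 ≤ αp / r * (Real.sqrt 3 * Lc) := by
      apply one_le_of_sq (by positivity)
      have heq : (αp / r * (Real.sqrt 3 * Lc)) ^ 2 = 3 * αp ^ 2 * Lc ^ 2 / r ^ 2 := by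
        rw [mul_pow, div_pow, mul_pow, h3]; ring
      rw [heq, le_div_iff₀ (by positivity), hr2]
      nlinarith [mul_le_mul_of_nonneg_left hLk2 (sq_nonneg αp)]
    refine ⟨lt_min (by positivity) (by positivity), ?_, ?_⟩
    · rcases le_total (s * αp) (αp / r) with h | h
      · rw [min_eq_left h]; exact hfirst
      · rw [min_eq_right h]; exact hsecond
    · rcases le_total (s * αp) (αp / r) with h | h
      · rw [min_eq_left h]
        have hdiv : s * αp / αp = s := by field_simp
        rw [hdiv]; exact hAinv
      · rw [min_eq_right h]
        have hdiv : αp / r / αp = 1 / r := by field_simp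
        have heq2 : (αp / r * Lc) ^ 2 = (αp * Lc) ^ 2 / r ^ 2 := by
          rw [mul_pow, div_pow]; ring
        rw [hdiv, heq2]
        have hQ : (1:ℝ)/2 ≤ (αp * Lc) ^ 2 / r ^ 2 := by
          rw [le_div_iff₀ (by positivity), hr2]
          nlinarith [mul_le_mul_of_nonneg_left hLk2 (sq_nonneg αp)]
        have hx : 0 ≤ 1 / r * ((αp * Lc) ^ 2 / r ^ 2) := by positivity
        linarith [hx, hQ]

theorem adgd2_stepsize_lower_bound (α θ L : ℕ → ℝ) (Lc : ℝ) (hLc : 0 < Lc)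
    (hα0 : 0 < α 0) (hθ0 : θ 0 = 1 / 3)
    (hLk : ∀ k ≥ 1, 0 ≤ L k ∧ L k ≤ Lc)
    (hα : ∀ k ≥ 1, α k = adgd2Step (α (k - 1)) (θ (k - 1)) (L k))
    (hθ : ∀ k ≥ 1, θ k = α k / α (k - 1))
    (hinit : α 0 * L 1 ∈ Set.Icc (1 / Real.sqrt 2) 2) :
    ∀ k ≥ 1, α k ≥ 1 / (Real.sqrt 3 * Lc) := by
  have h3pos : 0 < Real.sqrt 3 := Real.sqrt_pos.mpr (by norm_num)
  have h2pos : 0 < Real.sqrt 2 := Real.sqrt_pos.mpr (by norm_num)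
  have h22 : (Real.sqrt 2) ^ 2 = 2 := Real.sq_sqrt (by norm_num)
  obtain ⟨hL10, hL1c⟩ := hLk 1 (le_refl 1)
  obtain ⟨hinit1, -⟩ := hinit
  have hbase : 1 / 3 ≤ (2 / 3 + θ 0) * (α 0 * Lc) ^ 2 := by
    have h1 : 1 / Real.sqrt 2 ≤ α 0 * Lc := by
      refine le_trans hinit1 ?_
      have := mul_le_mul_of_nonneg_left hL1c (le_of_lt hα0)
      linarith
    have hhalf : (1 / Real.sqrt 2) ^ 2 = 1 / 2 := by
      rw [div_pow, one_pow, h22]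
    have h2 : (1:ℝ)/2 ≤ (α 0 * Lc) ^ 2 := by
      rw [← hhalf]
      exact pow_le_pow_left₀ (by positivity) h1 2
    rw [hθ0]; nlinarith
  have key : ∀ k, 0 < α k ∧ 0 ≤ θ k ∧ 1 / 3 ≤ (2 / 3 + θ k) * (α k * Lc) ^ 2 ∧
      (1 ≤ k → 1 ≤ α k * (Real.sqrt 3 * Lc)) := by
    intro k
    induction k with
    | zero => exact ⟨hα0, by rw [hθ0]; norm_num, hbase, by omega⟩
    | succ n ih =>
      obtain ⟨hp, htp, hinvp, -⟩ := ih
      obtain ⟨hL0, hLle⟩ := hLk (n + 1) (by omega)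
      have hαe := hα (n + 1) (by omega)
      have hθe := hθ (n + 1) (by omega)
      simp only [Nat.add_sub_cancel] at hαe hθe
      obtain ⟨g1, g2, g3⟩ := adgd2_step_key Lc (α n) (θ n) (L (n + 1)) hLc hp htp hL0 hLle hinvp
      rw [← hαe] at g1 g2 g3
      refine ⟨g1, ?_, ?_, fun _ => g2⟩
      · rw [hθe]; positivity
      · rw [hθe]; exact g3
  intro k hk
  obtain ⟨hpos, -, -, hge⟩ := key k
  rw [ge_iff_le, div_le_iff₀ (by positivity)]
  linarith [hge hk]
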